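/- Let k ≥ 2 be a natural number and C̃ ≥ 1 a real number such that |⟨φ^t⟩| ≤ (C̃ t)^{kt/2} and |⟨π^t⟩| ≤ (C̃ t)^{kt/2} for every natural number t ≥ 1. Then for every natural number s ≥ 1, |⟨(φ² + π²)^s⟩| ≤ 2 (2s + 1) (8 C̃ s)^{ks}. -/

import Mathlib

/-!
Expand `(φ² + π²)^s` into `2^s` words of length `2s` in `φ` and `π`. A word of length `n` is
brought to normal order `φ^a π^b` by at most `n²` adjacent swaps `πφ = φπ - i`, each of which
splits off a word of length `n - 2`; so by induction on `n`, `|⟨w⟩| ≤ (n + 1) M^n` as soon as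
`|⟨φ^a π^b⟩| ≤ M^(a+b)` for normal-ordered words and `n ≤ M`. For normal-ordered words,
Cauchy–Schwarz for the state gives `|⟨φ^a π^b⟩|² ≤ ⟨φ^(2a)⟩ ⟨π^(2b)⟩ ≤ (2 C̃ n)^(k(a+b))`, so
`M = (4 C̃ s)^(k/2)` works for all `n ≤ 2s` because `k ≥ 2`.
-/

open scoped ComplexOrder

/-- With `true` read as `φ` and `false` as `π`: the number of pairs in which `π` precedes `φ`. -/
def inversions : List Bool → ℕ
  | [] => 0
  | true :: l => inversions l
  | false :: l => l.count true + inversions l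

lemma inversions_le_length_sq (l : List Bool) : inversions l ≤ l.length ^ 2 := by
  induction l with
  | nil => simp [inversions]
  | cons b l ih =>
    have := List.count_le_length (a := true) (l := l)
    cases b <;> simp only [inversions, List.length_cons] <;> nlinarith

lemma inversions_append_false_true (x y : List Bool) :
    inversions (x ++ false :: true :: y) = inversions (x ++ true :: false :: y) + 1 := by
  induction x with
  | nil => simp [inversions]; omega
  | cons b x ih =>
    cases b <;> simp [inversions, List.count_append, ih]
    omega

lemma eq_replicate_append_replicate_of_inversions_eq_zero {l : List Bool}
    (h : inversions l = 0) :
    l = List.replicate (l.count true) true ++ List.replicate (l.count false) false := by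
  induction l with
  | nil => rfl
  | cons b l ih =>
    cases b with
    | true =>
      simp only [inversions] at h
      conv_lhs => rw [ih h]
      simp [List.replicate_succ]
    | false =>
      simp only [inversions, Nat.add_eq_zero_iff] at h
      conv_lhs => rw [ih h.2, h.1]
      simp [h.1, List.replicate_succ]

lemma exists_eq_append_false_true_of_inversions_pos {l : List Bool}
    (h : 0 < inversions l) : ∃ x y, l = x ++ false :: true :: y := by
  induction l with
  | nil => simp [inversions] at h
  | cons b l ih =>
    by_cases hl : 0 < inversions l
    · obtain ⟨x, y, rfl⟩ := ih hl
      exact ⟨b :: x, y, rfl⟩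
    cases b with
    | true => exact absurd h hl
    | false =>
      match l, hl with
      | true :: y, _ => exact ⟨[], y, rfl⟩
      | false :: y, hl => simp_all [inversions]
      | [], _ => simp [inversions] at h

section Word

variable {A : Type*} [Monoid A]

def word (φ π : A) (l : List Bool) : A := (l.map (cond · φ π)).prod

variable (φ π : A)

@[simp] lemma word_nil : word φ π [] = 1 := rfl

@[simp] lemma word_cons (b : Bool) (l : List Bool) :
    word φ π (b :: l) = cond b φ π * word φ π l := rfl

@[simp] lemma word_append (x y : List Bool) : word φ π (x ++ y) = word φ π x * word φ π y := by
  simp [word]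

@[simp] lemma word_replicate (b : Bool) (n : ℕ) :
    word φ π (List.replicate n b) = cond b φ π ^ n := by
  simp [word]

lemma word_eq_pow_mul_pow_of_inversions_eq_zero {l : List Bool} (h : inversions l = 0) :
    word φ π l = φ ^ l.count true * π ^ l.count false := by
  conv_lhs => rw [eq_replicate_append_replicate_of_inversions_eq_zero h]
  simp

end Word

section CCR

variable {A : Type*} [Ring A] [Algebra ℂ A] {φ π : A}

lemma word_append_false_true (hccr : φ * π - π * φ = Complex.I • (1 : A)) (x y : List Bool) :
    word φ π (x ++ false :: true :: y)
      = word φ π (x ++ true :: false :: y) - Complex.I • word φ π (x ++ y) := by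
  have hπφ : π * φ = φ * π - Complex.I • (1 : A) := by rw [← hccr]; abel
  simp only [word_append, word_cons, cond_true, cond_false, ← mul_assoc, hπφ]
  simp [mul_sub, sub_mul, mul_assoc]

variable (ω : A →ₗ[ℂ] ℂ)

lemma norm_map_word_le_add_inversions_mul (hccr : φ * π - π * φ = Complex.I • (1 : A))
    {n : ℕ} {M B : ℝ} (hsorted : ∀ a b, a + b = n → ‖ω (φ ^ a * π ^ b)‖ ≤ M ^ n)
    (hB : ∀ l : List Bool, l.length + 2 = n → ‖ω (word φ π l)‖ ≤ B)
    (l : List Bool) (hl : l.length = n) :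
    ‖ω (word φ π l)‖ ≤ M ^ n + inversions l * B := by
  induction hm : inversions l generalizing l with
  | zero =>
    rw [word_eq_pow_mul_pow_of_inversions_eq_zero φ π hm, Nat.cast_zero, zero_mul, add_zero]
    exact hsorted _ _ (by rw [← hl, List.count_true_add_count_false])
  | succ m ih =>
    obtain ⟨x, y, rfl⟩ := exists_eq_append_false_true_of_inversions_pos (l := l) (by omega)
    have hswap : inversions (x ++ true :: false :: y) = m := by
      have := inversions_append_false_true x y
      omega
    have hlen : (x ++ true :: false :: y).length = n := by simpa using hl
    calc ‖ω (word φ π (x ++ false :: true :: y))‖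
        ≤ ‖ω (word φ π (x ++ true :: false :: y))‖ + ‖ω (word φ π (x ++ y))‖ := by
          rw [word_append_false_true hccr, map_sub, map_smul, smul_eq_mul]
          refine (norm_sub_le _ _).trans_eq ?_
          rw [norm_mul, Complex.norm_I, one_mul]
      _ ≤ (M ^ n + m * B) + B := add_le_add (ih _ hlen hswap) (hB _ (by simp at hl ⊢; omega))
      _ = M ^ n + (m + 1 : ℕ) * B := by push_cast; ring

lemma norm_map_word_le (hccr : φ * π - π * φ = Complex.I • (1 : A)) {N : ℕ} {M : ℝ}
    (hsorted : ∀ a b, a + b ≤ N → ‖ω (φ ^ a * π ^ b)‖ ≤ M ^ (a + b)) (hNM : (N : ℝ) ≤ M)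
    (l : List Bool) (hl : l.length ≤ N) :
    ‖ω (word φ π l)‖ ≤ (l.length + 1) * M ^ l.length := by
  induction hn : l.length using Nat.strong_induction_on generalizing l with
  | _ n ih =>
  have hM : 0 ≤ M := (Nat.cast_nonneg N).trans hNM
  have hsorted' : ∀ a b, a + b = n → ‖ω (φ ^ a * π ^ b)‖ ≤ M ^ n := fun a b hab ↦
    hab ▸ hsorted a b (hab ▸ hn ▸ hl)
  obtain hn2 | ⟨j, rfl⟩ : n < 2 ∨ ∃ j, n = j + 2 := by
    rcases Nat.lt_or_ge n 2 with h | h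
    exacts [.inl h, .inr ⟨n - 2, by omega⟩]
  · have := norm_map_word_le_add_inversions_mul ω hccr (B := 0) hsorted'
      (fun l' hl' ↦ by omega) l hn
    rw [mul_zero, add_zero] at this
    exact this.trans (le_mul_of_one_le_left (by positivity) (by simp))
  · have hB : ∀ l' : List Bool, l'.length + 2 = j + 2 → ‖ω (word φ π l')‖ ≤ (j + 1) * M ^ j :=
      fun l' hl' ↦ ih j (by omega) l' (by omega) (by omega)
    have hinv : (inversions l : ℝ) ≤ ((j + 2 : ℕ) : ℝ) ^ 2 := by
      exact_mod_cast hn ▸ inversions_le_length_sq l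
    have hjM : ((j + 2 : ℕ) : ℝ) ≤ M := (Nat.cast_le.mpr (hn ▸ hl)).trans hNM
    push_cast at hinv hjM ⊢
    calc ‖ω (word φ π l)‖ ≤ M ^ (j + 2) + inversions l * ((j + 1) * M ^ j) :=
          norm_map_word_le_add_inversions_mul ω hccr hsorted' hB l hn
      _ ≤ M ^ (j + 2) + (j + 2) ^ 2 * ((j + 1) * M ^ j) := by gcongr
      _ = M ^ (j + 2) + (j + 2) * (((j + 2) * (j + 1)) * M ^ j) := by ring
      _ ≤ M ^ (j + 2) + (j + 2) * (M ^ 2 * M ^ j) := by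
          have : ((j : ℝ) + 2) * (j + 1) ≤ M ^ 2 := by nlinarith
          gcongr
      _ = (j + 2 + 1) * M ^ (j + 2) := by ring

lemma norm_map_word_mul_pow_le {B : ℝ} (t n : ℕ)
    (hB : ∀ l : List Bool, l.length = n + 2 * t → ‖ω (word φ π l)‖ ≤ B)
    (l : List Bool) (hl : l.length = n) :
    ‖ω (word φ π l * (φ ^ 2 + π ^ 2) ^ t)‖ ≤ 2 ^ t * B := by
  induction t generalizing n l with
  | zero => simpa using hB l hl
  | succ t ih =>
    have hB' : ∀ l' : List Bool, l'.length = (n + 2) + 2 * t → ‖ω (word φ π l')‖ ≤ B :=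
      fun l' hl' ↦ hB l' (by omega)
    have hsplit : word φ π l * (φ ^ 2 + π ^ 2) ^ (t + 1)
        = word φ π (l ++ [true, true]) * (φ ^ 2 + π ^ 2) ^ t
          + word φ π (l ++ [false, false]) * (φ ^ 2 + π ^ 2) ^ t := by
      simp [pow_succ', mul_add, add_mul, mul_assoc]
    calc ‖ω (word φ π l * (φ ^ 2 + π ^ 2) ^ (t + 1))‖
        ≤ ‖ω (word φ π (l ++ [true, true]) * (φ ^ 2 + π ^ 2) ^ t)‖
          + ‖ω (word φ π (l ++ [false, false]) * (φ ^ 2 + π ^ 2) ^ t)‖ := by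
          rw [hsplit, map_add]; exact norm_add_le _ _
      _ ≤ 2 ^ t * B + 2 ^ t * B :=
          add_le_add (ih _ hB' _ (by simp [hl])) (ih _ hB' _ (by simp [hl]))
      _ = 2 ^ (t + 1) * B := by ring

end CCR

lemma re_map_pow_two_mul_le {A : Type*} [Ring A] [Algebra ℂ A] (ω : A →ₗ[ℂ] ℂ)
    (hω1 : ω 1 = 1) {x : A} {k : ℕ} {C : ℝ} (hC : 0 ≤ C)
    (hx : ∀ t : ℕ, 1 ≤ t → ‖ω (x ^ t)‖ ≤ (C * t) ^ (((k * t : ℕ) : ℝ) / 2))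
    {c N : ℕ} (hcN : c ≤ N) :
    (ω (x ^ (2 * c))).re ≤ (2 * C * N) ^ (k * c) := by
  rcases Nat.eq_zero_or_pos c with rfl | hc
  · simp [hω1]
  have hexp : ((k * (2 * c) : ℕ) : ℝ) / 2 = ((k * c : ℕ) : ℝ) := by push_cast; ring
  calc (ω (x ^ (2 * c))).re ≤ ‖ω (x ^ (2 * c))‖ := Complex.re_le_norm _
    _ ≤ (2 * C * c) ^ (k * c) := by
        have h := hx (2 * c) (by omega)
        rwa [hexp, Real.rpow_natCast, Nat.cast_mul, Nat.cast_ofNat, mul_left_comm, ← mul_assoc] at h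
    _ ≤ (2 * C * N) ^ (k * c) := by gcongr

section State

variable {A : Type*} [Ring A] [Algebra ℂ A] [StarRing A] [StarModule ℂ A]
  (ω : A →ₗ[ℂ] ℂ)

lemma conj_map_star_mul (hω : ∀ a : A, 0 ≤ ω (star a * a)) (a b : A) :
    starRingEnd ℂ (ω (star a * b)) = ω (star b * a) := by
  have him : ∀ c : A, (ω (star c * c)).im = 0 := fun c ↦ (Complex.nonneg_iff.mp (hω c)).2.symm
  have hplus := him (a + b)
  have hI := him (a + Complex.I • b)
  simp only [star_add, star_smul, add_mul, mul_add, smul_mul_assoc, mul_smul_comm,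
    map_add, map_smul, smul_eq_mul, Complex.add_im, him a, him b] at hplus hI
  simp [Complex.mul_im, him b] at hI
  apply Complex.ext <;> simp <;> linarith

lemma norm_map_star_mul_sq_le (hω : ∀ a : A, 0 ≤ ω (star a * a)) (a b : A) :
    ‖ω (star a * b)‖ ^ 2 ≤ (ω (star a * a)).re * (ω (star b * b)).re := by
  let _ : PreInnerProductSpace.Core ℂ A :=
    { inner a b := ω (star a * b)
      conj_inner_symm a b := conj_map_star_mul ω hω b a
      re_inner_nonneg a := (Complex.nonneg_iff.mp (hω a)).1
      add_left a b c := by simp [add_mul]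
      smul_left a b r := by simp }
  have h := InnerProductSpace.Core.inner_mul_inner_self_le (𝕜 := ℂ) a b
  rwa [← InnerProductSpace.Core.inner_conj_symm b a, RCLike.norm_conj, ← sq] at h

lemma norm_map_pow_mul_pow_le (hω1 : ω 1 = 1) (hω : ∀ a : A, 0 ≤ ω (star a * a)) {φ π : A}
    (hφ : star φ = φ) (hπ : star π = π) {k : ℕ} {C : ℝ} (hC : 0 ≤ C)
    (hφmom : ∀ t : ℕ, 1 ≤ t → ‖ω (φ ^ t)‖ ≤ (C * t) ^ (((k * t : ℕ) : ℝ) / 2))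
    (hπmom : ∀ t : ℕ, 1 ≤ t → ‖ω (π ^ t)‖ ≤ (C * t) ^ (((k * t : ℕ) : ℝ) / 2))
    {a b N : ℕ} (hab : a + b ≤ N) :
    ‖ω (φ ^ a * π ^ b)‖ ≤ √((2 * C * N) ^ k) ^ (a + b) := by
  have hsq : ∀ {x : A}, star x = x → ∀ c : ℕ, star (x ^ c) * x ^ c = x ^ (2 * c) :=
    fun hx c ↦ by rw [star_pow, hx, ← pow_add, two_mul]
  have hcs := norm_map_star_mul_sq_le ω hω (φ ^ a) (π ^ b)
  rw [hsq hφ, hsq hπ, star_pow, hφ] at hcs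
  have hπnn : 0 ≤ (ω (π ^ (2 * b))).re := hsq hπ b ▸ (Complex.nonneg_iff.mp (hω _)).1
  rw [← pow_le_pow_iff_left₀ (norm_nonneg _) (by positivity) two_ne_zero]
  calc ‖ω (φ ^ a * π ^ b)‖ ^ 2 ≤ (2 * C * N) ^ (k * a) * (2 * C * N) ^ (k * b) :=
        hcs.trans (mul_le_mul (re_map_pow_two_mul_le ω hω1 hC hφmom (by omega))
          (re_map_pow_two_mul_le ω hω1 hC hπmom (by omega)) hπnn (by positivity))
    _ = (√((2 * C * N) ^ k) ^ 2) ^ (a + b) := by rw [Real.sq_sqrt (by positivity)]; ring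
    _ = (√((2 * C * N) ^ k) ^ (a + b)) ^ 2 := by ring

end State

/-- Moment bound for the number operator (Proposition 5 of the paper): for a state
`ω` on a unital ℂ-star-algebra, self-adjoint `φ, π` with `φπ - πφ = i·1`, `k ≥ 2`,
and `C̃ ≥ 1` with `|⟨φ^t⟩| ≤ (C̃ t)^{kt/2}` and `|⟨π^t⟩| ≤ (C̃ t)^{kt/2}` for all
`t ≥ 1`, one has `|⟨(φ² + π²)^s⟩| ≤ 2(2s+1)(8 C̃ s)^{ks}` for every `s ≥ 1`. -/
theorem stmt_10 {A : Type*} [Ring A] [Algebra ℂ A] [StarRing A] [StarModule ℂ A]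
    (ω : A →ₗ[ℂ] ℂ) (hω1 : ω 1 = 1) (hωpos : ∀ a : A, 0 ≤ ω (star a * a))
    (φ π : A) (hφ : star φ = φ) (hπ : star π = π)
    (hccr : φ * π - π * φ = Complex.I • (1 : A))
    (k : ℕ) (hk : 2 ≤ k) (C : ℝ) (hC : 1 ≤ C)
    (hφmom : ∀ t : ℕ, 1 ≤ t →
      ‖ω (φ ^ t)‖ ≤ (C * t) ^ (((k * t : ℕ) : ℝ) / 2))
    (hπmom : ∀ t : ℕ, 1 ≤ t →
      ‖ω (π ^ t)‖ ≤ (C * t) ^ (((k * t : ℕ) : ℝ) / 2)) :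
    ∀ s : ℕ, 1 ≤ s →
      ‖ω ((φ ^ 2 + π ^ 2) ^ s)‖ ≤
        2 * (2 * s + 1) * (8 * C * s) ^ (k * s) := by
  intro s hs
  set M := √((2 * C * (2 * s : ℕ)) ^ k)
  have hX : (1 : ℝ) ≤ 2 * C * (2 * s : ℕ) := by
    push_cast; nlinarith [(Nat.one_le_cast (α := ℝ)).mpr hs]
  have hNM : ((2 * s : ℕ) : ℝ) ≤ M := by
    rw [Real.le_sqrt (by positivity) (by positivity)]
    calc ((2 * s : ℕ) : ℝ) ^ 2 ≤ (2 * C * (2 * s : ℕ)) ^ 2 := by gcongr; nlinarith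
      _ ≤ (2 * C * (2 * s : ℕ)) ^ k := pow_le_pow_right₀ hX hk
  have hwords : ∀ l : List Bool, l.length = 0 + 2 * s →
      ‖ω (word φ π l)‖ ≤ (2 * s + 1) * M ^ (2 * s) := fun l hl ↦ by
    simpa [hl, M] using norm_map_word_le ω hccr
      (fun a b hab ↦ norm_map_pow_mul_pow_le ω hω1 hωpos hφ hπ (by positivity) hφmom hπmom hab)
      hNM l (by omega)
  have hM : M ^ (2 * s) = (4 * C * s) ^ (k * s) := by
    rw [pow_mul, Real.sq_sqrt (by positivity), ← pow_mul]; push_cast; ring_nf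
  calc ‖ω ((φ ^ 2 + π ^ 2) ^ s)‖ ≤ 2 ^ s * ((2 * s + 1) * M ^ (2 * s)) := by
        simpa using norm_map_word_mul_pow_le ω s 0 hwords [] rfl
    _ = (2 * s + 1) * (2 ^ s * (4 * C * s) ^ (k * s)) := by rw [hM]; ring
    _ ≤ (2 * s + 1) * (2 ^ (k * s) * (4 * C * s) ^ (k * s)) := by
        gcongr
        exacts [one_le_two, by nlinarith]
    _ = (2 * s + 1) * (8 * C * s) ^ (k * s) := by rw [← mul_pow]; ring_nf
    _ ≤ 2 * (2 * s + 1) * (8 * C * s) ^ (k * s) := by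
        have : 0 ≤ (2 * s + 1) * (8 * C * s) ^ (k * s) := by positivity
        linarith
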